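/- arXiv:math/0508636 — 2 statements merged into one kernel-verified Lean document; each statement's English description precedes it below -/
import Mathlib

section
/- Let A be the mechanical connection on Q → Q/G for a free isometric G-action, μ ∈ 𝔤*, and α_μ(q) = A(q)*μ. Then for each q ∈ Q, α_μ(q) is the unique minimizer of the kinetic energy K(β_q) = ½‖β_q‖² over all β_q ∈ J⁻¹(μ) ∩ T*_qQ, where the norm on covectors is induced by the Riemannian metric. -/
/-!
`gen q ∘ A q` is the metric-orthogonal projection onto the vertical space `{ξ_Q(q)}`, so `A q`
inverts `gen q` on the left and kills the horizontal vectors. Hence the sharp `u` of `A(q)*μ` lies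
in the constraint set, and for any other `w` there, `w - u` is horizontal and orthogonal to `u`.
Pythagoras, `⟪w, w⟫ = ⟪u, u⟫ + ⟪w - u, w - u⟫`, then gives minimality and, by definiteness,
uniqueness.
-/

namespace MechanicalConnection

variable {E 𝔤 : Type*} [NormedAddCommGroup E] [NormedSpace ℝ E]
  [NormedAddCommGroup 𝔤] [NormedSpace ℝ 𝔤]

section Pythagoras

variable (B : E →L[ℝ] E →L[ℝ] ℝ)

lemma apply_self_nonneg (hpos : ∀ v, v ≠ 0 → 0 < B v v) (v : E) : 0 ≤ B v v := by
  rcases eq_or_ne v 0 with rfl | hv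
  · simp
  · exact (hpos v hv).le

lemma apply_self_eq_add_of_apply_sub_eq_zero (hsymm : ∀ u v, B u v = B v u) {u w : E}
    (horth : B u (w - u) = 0) : B w w = B u u + B (w - u) (w - u) := by
  have horth' : B (w - u) u = 0 := by rw [hsymm, horth]
  calc B w w = B (u + (w - u)) (u + (w - u)) := by rw [add_sub_cancel]
    _ = B u u + B u (w - u) + B (w - u) u + B (w - u) (w - u) := by
      simp only [map_add, add_apply]; ring
    _ = B u u + B (w - u) (w - u) := by rw [horth, horth']; ring

end Pythagoras

section Connection

variable {B : E →L[ℝ] E →L[ℝ] ℝ} {gen : 𝔤 →L[ℝ] E} {A : E →L[ℝ] 𝔤}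

/-- The constraint set `J⁻¹(μ) ∩ T*_qQ`, with covectors represented by their metric sharps. -/
def momentumLevel (B : E →L[ℝ] E →L[ℝ] ℝ) (gen : 𝔤 →L[ℝ] E) (μ : 𝔤 →L[ℝ] ℝ) : Set E :=
  {w | ∀ ξ, B w (gen ξ) = μ ξ}

lemma eq_zero_of_apply_gen_self_eq_zero (hpos : ∀ v, v ≠ 0 → 0 < B v v)
    (hfree : ∀ ξ, gen ξ = 0 → ξ = 0) {ζ : 𝔤} (h : B (gen ζ) (gen ζ) = 0) : ζ = 0 :=
  hfree ζ <| by
    by_contra hne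
    exact (hpos _ hne).ne' h

lemma connection_apply_gen (hpos : ∀ v, v ≠ 0 → 0 < B v v) (hfree : ∀ ξ, gen ξ = 0 → ξ = 0)
    (hA : ∀ v η, B (gen (A v)) (gen η) = B v (gen η)) (ξ : 𝔤) : A (gen ξ) = ξ := by
  refine sub_eq_zero.mp (eq_zero_of_apply_gen_self_eq_zero hpos hfree ?_)
  have h := hA (gen ξ) (A (gen ξ) - ξ)
  rw [map_sub gen] at h ⊢
  rw [map_sub B, sub_apply, h, sub_self]

lemma connection_eq_zero_of_forall_apply_gen_eq_zero (hpos : ∀ v, v ≠ 0 → 0 < B v v)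
    (hfree : ∀ ξ, gen ξ = 0 → ξ = 0) (hA : ∀ v η, B (gen (A v)) (gen η) = B v (gen η))
    {v : E} (hv : ∀ η, B v (gen η) = 0) : A v = 0 :=
  eq_zero_of_apply_gen_self_eq_zero hpos hfree (by rw [hA, hv])

lemma sharp_mem_momentumLevel (hpos : ∀ v, v ≠ 0 → 0 < B v v)
    (hfree : ∀ ξ, gen ξ = 0 → ξ = 0) (hA : ∀ v η, B (gen (A v)) (gen η) = B v (gen η))
    {μ : 𝔤 →L[ℝ] ℝ} {u : E} (hu : ∀ v, B u v = μ (A v)) :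
    u ∈ momentumLevel B gen μ := fun ξ => by
  rw [hu, connection_apply_gen hpos hfree hA]

lemma apply_sub_eq_zero_of_mem_momentumLevel (hpos : ∀ v, v ≠ 0 → 0 < B v v)
    (hfree : ∀ ξ, gen ξ = 0 → ξ = 0) (hA : ∀ v η, B (gen (A v)) (gen η) = B v (gen η))
    {μ : 𝔤 →L[ℝ] ℝ} {u w : E} (hu : ∀ v, B u v = μ (A v)) (hw : w ∈ momentumLevel B gen μ) :
    B u (w - u) = 0 := by
  rw [hu, connection_eq_zero_of_forall_apply_gen_eq_zero hpos hfree hA, map_zero]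
  intro η
  rw [map_sub B, sub_apply, hw η, sharp_mem_momentumLevel hpos hfree hA hu η, sub_self]

end Connection

end MechanicalConnection

open MechanicalConnection in
theorem alpha_mu_minimizes_kinetic_energy_general
    {E : Type*} [NormedAddCommGroup E] [NormedSpace ℝ E]
    {𝔤 : Type*} [NormedAddCommGroup 𝔤] [NormedSpace ℝ 𝔤]
    -- the Riemannian metric at q
    (met : E → E →L[ℝ] E →L[ℝ] ℝ)
    (hmetsymm : ∀ q u v, met q u v = met q v u)
    (hmetpos : ∀ q v, v ≠ 0 → 0 < met q v v)
    -- infinitesimal generators and freeness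
    (gen : E → 𝔤 →L[ℝ] E)
    (hfree : ∀ q ξ, gen q ξ = 0 → ξ = 0)
    -- the mechanical connection: defining identity of A(q) = 𝕀(q)⁻¹ J(·♭)
    (A : E → E →L[ℝ] 𝔤)
    (hAdef : ∀ q v η, met q (gen q (A q v)) (gen q η) = met q v (gen q η))
    (μ : 𝔤 →L[ℝ] ℝ) (q : E)
    -- u = α_μ(q)♯ : the metric representative of α_μ(q) = A(q)*μ
    (u : E) (hu : ∀ v, met q u v = μ (A q v)) :
    (∀ ξ, met q u (gen q ξ) = μ ξ) ∧
    (∀ w : E, (∀ ξ, met q w (gen q ξ) = μ ξ) →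
      (1 / 2) * met q u u ≤ (1 / 2) * met q w w) ∧
    (∀ w : E, (∀ ξ, met q w (gen q ξ) = μ ξ) →
      (1 / 2) * met q w w = (1 / 2) * met q u u → w = u) := by
  have hpos := hmetpos q
  have hA := hAdef q
  have hpythagoras : ∀ w ∈ momentumLevel (met q) (gen q) μ,
      met q w w = met q u u + met q (w - u) (w - u) := fun w hw =>
    apply_self_eq_add_of_apply_sub_eq_zero (met q) (hmetsymm q)
      (apply_sub_eq_zero_of_mem_momentumLevel hpos (hfree q) hA hu hw)
  refine ⟨sharp_mem_momentumLevel hpos (hfree q) hA hu, fun w hw => ?_, fun w hw heq => ?_⟩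
  · linarith [hpythagoras w hw, apply_self_nonneg (met q) hpos (w - u)]
  · refine sub_eq_zero.mp (by_contra fun hne => ?_)
    linarith [hpythagoras w hw, hpos (w - u) hne]

/-- for the mechanical connection `A` on `Q → Q/G` and `μ ∈ 𝔤*`,
the covector `α_μ(q) = A(q)*μ` (represented here through its metric sharp `u`,
i.e. `⟨⟨u, v⟩⟩ = ⟨μ, A(q)(v)⟩` for all `v`) is the unique minimizer of the
kinetic energy `K(β) = ½‖β‖²` over the affine subspace
`J⁻¹(μ) ∩ T_q*Q = {β : β(ξ_Q(q)) = ⟨μ, ξ⟩ for all ξ}` (covectors `β`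
represented by their sharps `w`, with `K(w♭) = ½⟨⟨w, w⟩⟩`). -/
theorem alpha_mu_minimizes_kinetic_energy
    {E : Type*} [NormedAddCommGroup E] [NormedSpace ℝ E]
    {𝔤 : Type*} [NormedAddCommGroup 𝔤] [NormedSpace ℝ 𝔤]
    {G : Type*} [Group G]
    (Φ : G → E → E)
    (hone : ∀ q, Φ 1 q = q)
    (hmul : ∀ g h q, Φ (g * h) q = Φ g (Φ h q))
    (exp : 𝔤 → G)
    -- the Riemannian metric at q
    (met : E → E →L[ℝ] E →L[ℝ] ℝ)
    (hmetsymm : ∀ q u v, met q u v = met q v u)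
    (hmetpos : ∀ q v, v ≠ 0 → 0 < met q v v)
    -- infinitesimal generators and freeness
    (gen : E → 𝔤 →L[ℝ] E)
    (hgen : ∀ q ξ, gen q ξ = deriv (fun t : ℝ => Φ (exp (t • ξ)) q) 0)
    (hfree : ∀ q ξ, gen q ξ = 0 → ξ = 0)
    -- the mechanical connection: defining identity of A(q) = 𝕀(q)⁻¹ J(·♭)
    (A : E → E →L[ℝ] 𝔤)
    (hAdef : ∀ q v η, met q (gen q (A q v)) (gen q η) = met q v (gen q η))
    (μ : 𝔤 →L[ℝ] ℝ) (q : E)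
    -- u = α_μ(q)♯ : the metric representative of α_μ(q) = A(q)*μ
    (u : E) (hu : ∀ v, met q u v = μ (A q v)) :
    (∀ ξ, met q u (gen q ξ) = μ ξ) ∧
    (∀ w : E, (∀ ξ, met q w (gen q ξ) = μ ξ) →
      (1 / 2) * met q u u ≤ (1 / 2) * met q w w) ∧
    (∀ w : E, (∀ ξ, met q w (gen q ξ) = μ ξ) →
      (1 / 2) * met q w w = (1 / 2) * met q u u → w = u) :=
  alpha_mu_minimizes_kinetic_energy_general met hmetsymm hmetpos gen hfree A hAdef μ q u hu
end

section
/- For the heavy top bracket on ℝ³ × ℝ³ and Hamiltonian h(Π,Γ) = ½ Π·𝕀⁻¹Π + Mgℓ Γ·χ, where 𝕀 = diag(I₁,I₂,I₃) with I_i > 0, M, g, ℓ ∈ ℝ, and χ ∈ ℝ³ fixed, the Hamiltonian equations Ḟ = {F, h} for the coordinate functions yield exactly the heavy top equations Π̇ = Π × Ω + Mgℓ Γ × χ, Γ̇ = Γ × Ω, where Ω = 𝕀⁻¹Π. -/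
open Matrix

noncomputable section

abbrev V3 := Fin 3 → ℝ

/-- Partial gradient in the first (`Π`) factor. -/
def gradP (f : V3 × V3 → ℝ) (x : V3 × V3) : V3 :=
  fun i => fderiv ℝ f x (Pi.single i 1, 0)

/-- Partial gradient in the second (`Γ`) factor. -/
def gradG (f : V3 × V3 → ℝ) (x : V3 × V3) : V3 :=
  fun i => fderiv ℝ f x (0, Pi.single i 1)

/-- The heavy top (Lie–Poisson) bracket on `ℝ³ × ℝ³ ≅ 𝔰𝔢(3)*`. -/
def ht (f g : V3 × V3 → ℝ) (x : V3 × V3) : ℝ :=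
  -(x.1 ⬝ᵥ crossProduct (gradP f x) (gradP g x))
    - x.2 ⬝ᵥ (crossProduct (gradP f x) (gradG g x)
        - crossProduct (gradP g x) (gradG f x))

/-!
The partial gradients of the coordinate function `Πᵢ` are `(eᵢ, 0)` and those of `Γᵢ` are
`(0, eᵢ)`, so the triple product identity `u ⬝ (v × w) = v ⬝ (w × u)` evaluates the bracket
for an arbitrary `h`: `{Πᵢ, h} = (Π × ∇_Π h + Γ × ∇_Γ h)ᵢ` and `{Γᵢ, h} = (Γ × ∇_Π h)ᵢ`.
For the heavy top Hamiltonian, `∇_Π h = 𝕀⁻¹Π = Ω` and `∇_Γ h = Mgℓ χ`.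
-/

section CoordinateDerivatives

variable {𝕜 ι F : Type*} [NontriviallyNormedField 𝕜] [NormedAddCommGroup F] [NormedSpace 𝕜 F]

theorem fderiv_fst_coord (j : ι) (x v : (ι → 𝕜) × F) :
    fderiv 𝕜 (fun y => y.1 j) x v = v.1 j := by
  change fderiv 𝕜 ((ContinuousLinearMap.proj j).comp (ContinuousLinearMap.fst 𝕜 (ι → 𝕜) F)) x v = _
  rw [ContinuousLinearMap.fderiv]
  rfl

theorem fderiv_snd_coord (j : ι) (x v : F × (ι → 𝕜)) :
    fderiv 𝕜 (fun y => y.2 j) x v = v.2 j := by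
  change fderiv 𝕜 ((ContinuousLinearMap.proj j).comp (ContinuousLinearMap.snd 𝕜 F (ι → 𝕜))) x v = _
  rw [ContinuousLinearMap.fderiv]
  rfl

end CoordinateDerivatives

section Coordinates

variable (i : Fin 3) (x : V3 × V3)

theorem gradP_fst_coord : gradP (fun y => y.1 i) x = Pi.single i 1 := by
  ext j
  simp [gradP, fderiv_fst_coord, Pi.single_apply, eq_comm]

theorem gradG_fst_coord : gradG (fun y => y.1 i) x = 0 := by
  ext j
  simp [gradG, fderiv_fst_coord]

theorem gradP_snd_coord : gradP (fun y => y.2 i) x = 0 := by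
  ext j
  simp [gradP, fderiv_snd_coord]

theorem gradG_snd_coord : gradG (fun y => y.2 i) x = Pi.single i 1 := by
  ext j
  simp [gradG, fderiv_snd_coord, Pi.single_apply, eq_comm]

theorem ht_fst_coord (h : V3 × V3 → ℝ) :
    ht (fun y => y.1 i) h x = (x.1 ⨯₃ gradP h x + x.2 ⨯₃ gradG h x) i := by
  simp only [ht, gradP_fst_coord, gradG_fst_coord, map_zero, sub_zero]
  rw [triple_product_permutation x.1, triple_product_permutation x.2, single_dotProduct,
    single_dotProduct, ← cross_anticomm (gradP h x), ← cross_anticomm (gradG h x)]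
  simp only [one_mul, Pi.neg_apply, Pi.add_apply]
  ring

theorem ht_snd_coord (h : V3 × V3 → ℝ) :
    ht (fun y => y.2 i) h x = (x.2 ⨯₃ gradP h x) i := by
  simp only [ht, gradP_snd_coord, gradG_snd_coord, map_zero, LinearMap.zero_apply, zero_sub,
    dotProduct_neg, dotProduct_zero, neg_zero, neg_neg]
  rw [triple_product_permutation, triple_product_permutation, single_dotProduct, one_mul]

end Coordinates

section Hamiltonian

variable (I : Fin 3 → ℝ) (c : ℝ) (χ : V3) (x : V3 × V3)

theorem gradP_heavyTop_hamiltonian :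
    gradP (fun y => (1 / 2) * (y.1 ⬝ᵥ fun j => y.1 j / I j) + c * (y.2 ⬝ᵥ χ)) x =
      fun j => x.1 j / I j := by
  ext i
  simp (disch := fun_prop) [gradP, dotProduct, div_eq_mul_inv, fderiv_fun_add, fderiv_fun_mul,
    fderiv_fun_sum, fderiv_fst_coord, fderiv_snd_coord, Pi.single_apply, Finset.sum_add_distrib]
  ring

theorem gradG_heavyTop_hamiltonian :
    gradG (fun y => (1 / 2) * (y.1 ⬝ᵥ fun j => y.1 j / I j) + c * (y.2 ⬝ᵥ χ)) x = c • χ := by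
  ext i
  simp (disch := fun_prop) [gradG, dotProduct, div_eq_mul_inv, fderiv_fun_add, fderiv_fun_mul,
    fderiv_fun_sum, fderiv_fst_coord, fderiv_snd_coord, Pi.single_apply]

end Hamiltonian

theorem heavy_top_equations_general
    (I : Fin 3 → ℝ)
    (M g ℓ : ℝ) (χ : V3)
    (Om : V3 × V3 → V3) (hOm : Om = fun x => fun j => x.1 j / I j)
    (h : V3 × V3 → ℝ)
    (hh : h = fun x => (1 / 2) * (x.1 ⬝ᵥ Om x) + M * g * ℓ * (x.2 ⬝ᵥ χ)) :
    (∀ (x : V3 × V3) (i : Fin 3),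
      ht (fun y => y.1 i) h x
        = (crossProduct x.1 (Om x) + (M * g * ℓ) • crossProduct x.2 χ) i) ∧
    (∀ (x : V3 × V3) (i : Fin 3),
      ht (fun y => y.2 i) h x = crossProduct x.2 (Om x) i) := by
  subst hOm hh
  refine ⟨fun x i => ?_, fun x i => ?_⟩
  · rw [ht_fst_coord, gradP_heavyTop_hamiltonian, gradG_heavyTop_hamiltonian, map_smul]
  · rw [ht_snd_coord, gradP_heavyTop_hamiltonian]

/-- for the heavy top Hamiltonian
`h(Π,Γ) = ½ Π⬝𝕀⁻¹Π + MgℓΓ⬝χ` (`𝕀 = diag(I₁,I₂,I₃)`, `Iᵢ > 0`), the Hamiltonian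
equations `Ḟ = {F,h}` for the coordinate functions give exactly the heavy top
equations `Π̇ = Π × Ω + Mgℓ Γ × χ`, `Γ̇ = Γ × Ω`, with `Ω = 𝕀⁻¹Π`. -/
theorem heavy_top_equations
    (I : Fin 3 → ℝ) (hI : ∀ i, 0 < I i)
    (M g ℓ : ℝ) (χ : V3)
    (Om : V3 × V3 → V3) (hOm : Om = fun x => fun j => x.1 j / I j)
    (h : V3 × V3 → ℝ)
    (hh : h = fun x => (1 / 2) * (x.1 ⬝ᵥ Om x) + M * g * ℓ * (x.2 ⬝ᵥ χ)) :
    (∀ (x : V3 × V3) (i : Fin 3),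
      ht (fun y => y.1 i) h x
        = (crossProduct x.1 (Om x) + (M * g * ℓ) • crossProduct x.2 χ) i) ∧
    (∀ (x : V3 × V3) (i : Fin 3),
      ht (fun y => y.2 i) h x = crossProduct x.2 (Om x) i) :=
  heavy_top_equations_general I M g ℓ χ Om hOm h hh
end
end
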